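/- arXiv:1812.09211 — 2 statements merged into one kernel-verified Lean document; each statement's English description precedes it below -/
import Mathlib

section
/- Let H be a complex Hilbert space, H_0 a bounded self-adjoint operator on H admitting a Hilbert basis of eigenvectors (pure point spectrum), and H_1, …, H_N bounded self-adjoint operators. For y ∈ ℝ^N write H(y) = H_0 + Σ_{j=1}^N y_j H_j. Then the strongly reachable set equals the restricted dynamical group: the closure, in the strong operator topology, of the set of all finite products exp(iτ_1 H(y^{(1)})) ⋯ exp(iτ_m H(y^{(m)})) with all τ_i > 0, equals the closure in the strong operator topology of the subgroup of invertible bounded operators generated by {exp(itH_j) : t ∈ ℝ, j = 0, …, N}. -/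
/-!
Reachable products lie in the norm closure of the dynamical group by the Lie–Trotter formula
`(exp (a/n) * exp (b/n)) ^ n → exp (a + b)`: in a closed monoid `M`, the elements `X` with
`exp (t X) ∈ M` for all real `t` are closed under addition.

Conversely, the reachable set is a monoid of unitaries, so its strong closure is again a monoid,
and the generators `exp (± i t H_j)` have to be reached. For a control,
`exp (i τ (H_0 + (t/τ) H_j)) → exp (i t H_j)` as `τ → 0⁺`. For the drift, negative times come from
recurrence: on finitely many eigenvectors the phases `exp (i s μ_k)` return simultaneously close
to `1` for arbitrarily large `s` (compactness of the torus), so `exp (i (t + s) H_0)`, a positive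
time evolution, is strongly close to `exp (i t H_0)` on the dense span of the eigenbasis.
-/

open scoped InnerProductSpace

/-- The closure of a set of bounded operators in the strong operator topology,
characterized via finite families of vectors and `ε`-approximation. -/
def strongClosure {H : Type*} [NormedAddCommGroup H] [InnerProductSpace ℂ H]
    (S : Set (H →L[ℂ] H)) : Set (H →L[ℂ] H) :=
  {T | ∀ ε : ℝ, 0 < ε → ∀ (M : ℕ) (ψ : Fin M → H),
    ∃ W ∈ S, ∀ j : Fin M, ‖W (ψ j) - T (ψ j)‖ < ε}

open NormedSpace Filter Topology Asymptotics
open Complex (I)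

lemma Submonoid.mem_closure_iff_exists_ofFn {M : Type*} [Monoid M] {s : Set M} {x : M} :
    x ∈ closure s ↔ ∃ (m : ℕ) (g : Fin m → M), (∀ i, g i ∈ s) ∧ x = (List.ofFn g).prod := by
  constructor
  · intro hx
    obtain ⟨l, hl, rfl⟩ := exists_list_of_mem_closure hx
    exact ⟨l.length, l.get, fun i => hl _ (List.get_mem l i), by rw [List.ofFn_get]⟩
  · rintro ⟨m, g, hg, rfl⟩
    refine (closure s).list_prod_mem fun y hy => ?_
    obtain ⟨i, rfl⟩ := List.mem_ofFn.mp hy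
    exact subset_closure (hg i)

section BanachAlgebra

variable {𝔸 : Type*} [NormedRing 𝔸] [NormOneClass 𝔸]

lemma norm_pow_sub_pow_le {u v : 𝔸} {m : ℝ} (hm : 1 ≤ m) (hu : ‖u‖ ≤ m) (hv : ‖v‖ ≤ m)
    (n : ℕ) : ‖u ^ n - v ^ n‖ ≤ n * m ^ n * ‖u - v‖ := by
  induction n with
  | zero => simp
  | succ n ih =>
    have htelescope : u ^ (n + 1) - v ^ (n + 1) = u * (u ^ n - v ^ n) + (u - v) * v ^ n := by
      rw [pow_succ', pow_succ']; noncomm_ring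
    have hvn : ‖v ^ n‖ ≤ m ^ (n + 1) :=
      calc ‖v ^ n‖ ≤ m ^ n := (norm_pow_le v n).trans (by gcongr)
        _ ≤ m ^ (n + 1) := pow_le_pow_right₀ hm n.le_succ
    calc ‖u ^ (n + 1) - v ^ (n + 1)‖
        ≤ ‖u‖ * ‖u ^ n - v ^ n‖ + ‖u - v‖ * ‖v ^ n‖ := by
          rw [htelescope]
          exact (norm_add_le _ _).trans (add_le_add (norm_mul_le _ _) (norm_mul_le _ _))
      _ ≤ m * (n * m ^ n * ‖u - v‖) + ‖u - v‖ * m ^ (n + 1) := by gcongr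
      _ = (n + 1 : ℕ) * m ^ (n + 1) * ‖u - v‖ := by push_cast; ring

lemma norm_exp_le_exp_norm [NormedAlgebra ℚ 𝔸] [CompleteSpace 𝔸] (x : 𝔸) :
    ‖exp x‖ ≤ Real.exp ‖x‖ := by
  rw [exp_eq_tsum ℚ, Real.exp_eq_exp_ℝ, exp_eq_tsum_div]
  refine (norm_tsum_le_tsum_norm (norm_expSeries_summable' x)).trans <|
    (norm_expSeries_summable' x).tsum_le_tsum (fun n => ?_) (expSeries_div_summable ‖x‖)
  rw [norm_smul, norm_inv, div_eq_inv_mul]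
  gcongr
  · rw [← Rat.norm_cast_real]; simp
  · exact norm_pow_le x n

omit [NormOneClass 𝔸] in
lemma Units.val_inv_eq_exp_neg [NormedAlgebra ℚ 𝔸] [CompleteSpace 𝔸] {u : 𝔸ˣ} {x : 𝔸}
    (hu : (u : 𝔸) = exp x) : ((u⁻¹ : 𝔸ˣ) : 𝔸) = exp (-x) := by
  rw [← Ring.inverse_unit, hu, Ring.inverse_exp]

variable {𝕂 : Type*} [RCLike 𝕂] [NormedAlgebra 𝕂 𝔸] [CompleteSpace 𝔸]

omit [NormOneClass 𝔸] in
lemma isLittleO_exp_smul_mul_exp_smul_sub_exp_smul_add (a b : 𝔸) :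
    (fun s : 𝕂 => exp (s • a) * exp (s • b) - exp (s • (a + b))) =o[𝓝 0] fun s => s := by
  have hprod : HasDerivAt (fun s : 𝕂 => exp (s • a) * exp (s • b)) (a + b) 0 := by
    simpa using (hasDerivAt_exp_smul_const' a (0 : 𝕂)).fun_mul (hasDerivAt_exp_smul_const b 0)
  have hsum : HasDerivAt (fun s : 𝕂 => exp (s • (a + b))) (a + b) 0 := by
    simpa using hasDerivAt_exp_smul_const' (a + b) (0 : 𝕂)
  simpa using hasDerivAt_iff_isLittleO_nhds_zero.mp (hprod.sub hsum)

lemma norm_exp_mul_exp_pow_sub_exp_add_le (a b : 𝔸) {n : ℕ} (hn : n ≠ 0) :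
    ‖(exp ((n : 𝕂)⁻¹ • a) * exp ((n : 𝕂)⁻¹ • b)) ^ n - exp (a + b)‖ ≤ Real.exp (‖a‖ + ‖b‖) *
      (n * ‖exp ((n : 𝕂)⁻¹ • a) * exp ((n : 𝕂)⁻¹ • b) - exp ((n : 𝕂)⁻¹ • (a + b))‖) := by
  let _ : NormedAlgebra ℚ 𝔸 := NormedAlgebra.restrictScalars ℚ 𝕂 𝔸
  have hnorm : ∀ x : 𝔸, ‖(n : 𝕂)⁻¹ • x‖ = ‖x‖ / n := by
    intro x
    rw [norm_smul, norm_inv, RCLike.norm_natCast, inv_mul_eq_div]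
  set m := Real.exp ((‖a‖ + ‖b‖) / n)
  have hm : 1 ≤ m := Real.one_le_exp (by positivity)
  have hmn : m ^ n = Real.exp (‖a‖ + ‖b‖) := by
    rw [← Real.exp_nat_mul, mul_div_cancel₀ _ (Nat.cast_ne_zero.mpr hn)]
  have hprod : ‖exp ((n : 𝕂)⁻¹ • a) * exp ((n : 𝕂)⁻¹ • b)‖ ≤ m :=
    calc _ ≤ Real.exp (‖a‖ / n) * Real.exp (‖b‖ / n) := by
          refine (norm_mul_le _ _).trans ?_
          rw [← hnorm, ← hnorm]
          gcongr <;> exact norm_exp_le_exp_norm _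
      _ = m := by rw [← Real.exp_add, ← add_div]
  have hsum : ‖exp ((n : 𝕂)⁻¹ • (a + b))‖ ≤ m := by
    refine (norm_exp_le_exp_norm _).trans (Real.exp_le_exp.mpr ?_)
    rw [hnorm]
    gcongr
    exact norm_add_le a b
  have hpow : exp ((n : 𝕂)⁻¹ • (a + b)) ^ n = exp (a + b) := by
    rw [← exp_nsmul, ← Nat.cast_smul_eq_nsmul 𝕂, smul_smul,
      mul_inv_cancel₀ (Nat.cast_ne_zero.mpr hn), one_smul]
  calc _ ≤ n * m ^ n * ‖exp ((n : 𝕂)⁻¹ • a) * exp ((n : 𝕂)⁻¹ • b) - exp ((n : 𝕂)⁻¹ • (a + b))‖ := by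
        rw [← hpow]
        exact norm_pow_sub_pow_le hm hprod hsum n
    _ = _ := by rw [hmn]; ring

theorem tendsto_exp_mul_exp_pow_nhds_exp_add (a b : 𝔸) :
    Tendsto (fun n : ℕ => (exp ((n : 𝕂)⁻¹ • a) * exp ((n : 𝕂)⁻¹ • b)) ^ n) atTop
      (𝓝 (exp (a + b))) := by
  have hsmall : Tendsto (fun n : ℕ => n * ‖exp ((n : 𝕂)⁻¹ • a) * exp ((n : 𝕂)⁻¹ • b) -
      exp ((n : 𝕂)⁻¹ • (a + b))‖) atTop (𝓝 0) := by
    have ho := (isLittleO_exp_smul_mul_exp_smul_sub_exp_smul_add a b).comp_tendsto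
      (tendsto_inv_atTop_nhds_zero_nat (𝕜 := 𝕂))
    refine ho.norm_norm.tendsto_div_nhds_zero.congr fun n => ?_
    simp only [Function.comp_apply, norm_inv, RCLike.norm_natCast, div_inv_eq_mul, mul_comm]
  rw [tendsto_iff_norm_sub_tendsto_zero]
  refine squeeze_zero' (Eventually.of_forall fun n => norm_nonneg _)
    ((eventually_ne_atTop 0).mono fun n hn => norm_exp_mul_exp_pow_sub_exp_add_le a b hn) ?_
  simpa using hsmall.const_mul (Real.exp (‖a‖ + ‖b‖))

lemma exp_smul_add_mem_of_isClosed {M : Submonoid 𝔸} (hM : IsClosed (M : Set 𝔸)) {a b : 𝔸}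
    (ha : ∀ t : ℝ, exp ((t : 𝕂) • a) ∈ M) (hb : ∀ t : ℝ, exp ((t : 𝕂) • b) ∈ M) (t : ℝ) :
    exp ((t : 𝕂) • (a + b)) ∈ M := by
  have hscale : ∀ (n : ℕ) (x : 𝔸), (n : 𝕂)⁻¹ • (t : 𝕂) • x = ((t / n : ℝ) : 𝕂) • x := by
    intro n x
    rw [smul_smul]
    push_cast
    ring_nf
  rw [smul_add]
  refine hM.mem_of_tendsto (tendsto_exp_mul_exp_pow_nhds_exp_add (𝕂 := 𝕂) _ _)
    (Eventually.of_forall fun n => ?_)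
  rw [hscale, hscale]
  exact M.pow_mem (M.mul_mem (ha _) (hb _)) n

lemma exp_smul_sum_mem_of_isClosed {M : Submonoid 𝔸} (hM : IsClosed (M : Set 𝔸)) {ι : Type*}
    (s : Finset ι) {a : ι → 𝔸} (ha : ∀ i ∈ s, ∀ t : ℝ, exp ((t : 𝕂) • a i) ∈ M) (t : ℝ) :
    exp ((t : 𝕂) • ∑ i ∈ s, a i) ∈ M :=
  Finset.sum_induction a (fun x => ∀ t : ℝ, exp ((t : 𝕂) • x) ∈ M)
    (fun _ _ hx hy => exp_smul_add_mem_of_isClosed hM hx hy) (fun _ => by simp [M.one_mem]) ha t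

end BanachAlgebra

lemma exists_gt_forall_norm_exp_mul_I_sub_one_lt {ι : Type*} [Fintype ι] (μ : ι → ℝ) (R : ℝ)
    {δ : ℝ} (hδ : 0 < δ) : ∃ s : ℝ, R < s ∧ ∀ k, ‖Complex.exp (↑(s * μ k) * I) - 1‖ < δ := by
  set f : ℕ → ι → ℂ := fun n k => Complex.exp (↑(n * μ k) * I)
  have hf : ∀ n, f n ∈ Metric.closedBall 0 1 := fun n =>
    mem_closedBall_zero_iff.mpr <| (pi_norm_le_iff_of_nonneg zero_le_one).mpr fun k =>
      (Complex.norm_exp_ofReal_mul_I _).le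
  obtain ⟨L, -, σ, hσ, hlim⟩ := tendsto_subseq_of_bounded Metric.isBounded_closedBall hf
  obtain ⟨N, hN⟩ := Metric.cauchySeq_iff'.mp (Tendsto.cauchySeq hlim) δ hδ
  set n := (⌈R⌉₊ + 1) + N
  have hgap : R < (σ n : ℝ) - σ N := by
    have h1 : ((⌈R⌉₊ + 1 + σ N : ℕ) : ℝ) ≤ σ n := by exact_mod_cast hσ.add_le_nat _ _
    push_cast at h1
    linarith [Nat.le_ceil R]
  refine ⟨σ n - σ N, hgap, fun k => ?_⟩
  have hdiff : f (σ n) k - f (σ N) k =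
      f (σ N) k * (Complex.exp (↑(((σ n : ℝ) - σ N) * μ k) * I) - 1) := by
    simp only [f, mul_sub, mul_one, ← Complex.exp_add]
    push_cast
    ring_nf
  calc ‖Complex.exp (↑(((σ n : ℝ) - σ N) * μ k) * I) - 1‖ = ‖f (σ n) k - f (σ N) k‖ := by
        rw [hdiff, norm_mul, Complex.norm_exp_ofReal_mul_I, one_mul]
    _ ≤ dist (f (σ n)) (f (σ N)) := by rw [← dist_eq_norm]; exact dist_le_pi_dist _ _ k
    _ < δ := hN n (by omega)

lemma exp_apply_of_apply_eq_smul {E : Type*} [NormedAddCommGroup E] [NormedSpace ℂ E]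
    [CompleteSpace E] {A : E →L[ℂ] E} {x : E} {c : ℂ} (h : A x = c • x) :
    exp A x = Complex.exp c • x := by
  have hpow : ∀ n : ℕ, (A ^ n) x = c ^ n • x := by
    intro n
    induction n with
    | zero => simp
    | succ n ih =>
      change (A ^ n) (A x) = _
      rw [h, map_smul, ih, smul_smul, pow_succ']
  rw [exp_eq_tsum ℂ, Complex.exp_eq_exp_ℂ, exp_eq_tsum ℂ,
    ← ContinuousLinearMap.apply_apply x, ContinuousLinearMap.map_tsum _ (expSeries_summable' A)]
  simp only [ContinuousLinearMap.apply_apply, smul_apply, hpow, smul_smul]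
  simpa only [smul_eq_mul] using (expSeries_summable' (𝕂 := ℂ) c).tsum_smul_const x

section StrongClosure

variable {H : Type*} [NormedAddCommGroup H] [InnerProductSpace ℂ H]

lemma closure_subset_strongClosure (S : Set (H →L[ℂ] H)) : closure S ⊆ strongClosure S := by
  intro T hT ε hε M ψ
  set C := 1 + ∑ j, ‖ψ j‖
  have hC : 0 < C := by positivity
  obtain ⟨W, hW, hWT⟩ := Metric.mem_closure_iff.mp hT (ε / C) (by positivity)
  refine ⟨W, hW, fun j => ?_⟩
  have hψ : ‖ψ j‖ ≤ C := by
    have := Finset.single_le_sum (fun i _ => norm_nonneg (ψ i)) (Finset.mem_univ j)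
    linarith
  calc ‖W (ψ j) - T (ψ j)‖ = ‖(W - T) (ψ j)‖ := rfl
    _ ≤ ‖W - T‖ * C := ((W - T).le_opNorm _).trans (by gcongr)
    _ < ε / C * C := by
        gcongr
        rwa [← dist_eq_norm, dist_comm]
    _ = ε := div_mul_cancel₀ ε hC.ne'

lemma subset_strongClosure (S : Set (H →L[ℂ] H)) : S ⊆ strongClosure S :=
  subset_closure.trans (closure_subset_strongClosure S)

lemma strongClosure_subset_strongClosure {S T : Set (H →L[ℂ] H)} (h : S ⊆ strongClosure T) :
    strongClosure S ⊆ strongClosure T := by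
  intro X hX ε hε M ψ
  obtain ⟨W, hW, hWX⟩ := hX (ε / 2) (by positivity) M ψ
  obtain ⟨V, hV, hVW⟩ := h hW (ε / 2) (by positivity) M ψ
  refine ⟨V, hV, fun j => ?_⟩
  calc ‖V (ψ j) - X (ψ j)‖ ≤ ‖V (ψ j) - W (ψ j)‖ + ‖W (ψ j) - X (ψ j)‖ :=
        norm_sub_le_norm_sub_add_norm_sub _ _ _
    _ < ε / 2 + ε / 2 := add_lt_add (hVW j) (hWX j)
    _ = ε := add_halves ε

lemma strongClosure_mono {S T : Set (H →L[ℂ] H)} (h : S ⊆ T) :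
    strongClosure S ⊆ strongClosure T :=
  strongClosure_subset_strongClosure (h.trans (subset_strongClosure T))

lemma mul_mem_strongClosure {S : Submonoid (H →L[ℂ] H)} (hS : ∀ W ∈ S, ‖W‖ ≤ 1)
    {T₁ T₂ : H →L[ℂ] H} (h₁ : T₁ ∈ strongClosure S) (h₂ : T₂ ∈ strongClosure S) :
    T₁ * T₂ ∈ strongClosure S := by
  intro ε hε M ψ
  obtain ⟨W₂, hW₂, hW₂T⟩ := h₂ (ε / 2) (by positivity) M ψ
  obtain ⟨W₁, hW₁, hW₁T⟩ := h₁ (ε / 2) (by positivity) M (fun j => T₂ (ψ j))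
  refine ⟨W₁ * W₂, S.mul_mem hW₁ hW₂, fun j => ?_⟩
  have hsplit : (W₁ * W₂) (ψ j) - (T₁ * T₂) (ψ j)
      = W₁ (W₂ (ψ j) - T₂ (ψ j)) + (W₁ (T₂ (ψ j)) - T₁ (T₂ (ψ j))) := by
    simp only [map_sub]
    abel
  calc ‖(W₁ * W₂) (ψ j) - (T₁ * T₂) (ψ j)‖
      ≤ ‖W₂ (ψ j) - T₂ (ψ j)‖ + ‖W₁ (T₂ (ψ j)) - T₁ (T₂ (ψ j))‖ := by
        rw [hsplit]
        exact (norm_add_le _ _).trans <| add_le_add_left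
          ((W₁.le_opNorm _).trans (mul_le_of_le_one_left (norm_nonneg _) (hS W₁ hW₁))) _
    _ < ε / 2 + ε / 2 := add_lt_add (hW₂T j) (hW₁T j)
    _ = ε := add_halves ε

lemma HilbertBasis.exists_finset_forall_norm_sub_sum_lt {ι κ : Type*} [Finite κ]
    (b : HilbertBasis ι ℂ H) (ψ : κ → H) {ε : ℝ} (hε : 0 < ε) :
    ∃ K : Finset ι, ∀ j, ‖ψ j - ∑ k ∈ K, b.repr (ψ j) k • b k‖ < ε := by
  have hev : ∀ᶠ K in atTop, ∀ j, ∑ k ∈ K, b.repr (ψ j) k • b k ∈ Metric.ball (ψ j) ε :=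
    eventually_all.mpr fun j => b.hasSum_repr (ψ j) (Metric.ball_mem_nhds _ hε)
  obtain ⟨K, hK⟩ := hev.exists
  exact ⟨K, fun j => by simpa [dist_eq_norm, norm_sub_rev] using hK j⟩

lemma HilbertBasis.mem_strongClosure_of_forall_finset {ι : Type*} (b : HilbertBasis ι ℂ H)
    {S : Set (H →L[ℂ] H)} {T : H →L[ℂ] H} (hS : ∀ W ∈ S, ‖W‖ ≤ 1) (hT : ‖T‖ ≤ 1)
    (h : ∀ δ > 0, ∀ K : Finset ι, ∃ W ∈ S, ∀ k ∈ K, ‖W (b k) - T (b k)‖ < δ) :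
    T ∈ strongClosure S := by
  intro ε hε M ψ
  obtain ⟨K, hK⟩ := b.exists_finset_forall_norm_sub_sum_lt ψ (by positivity : 0 < ε / 3)
  set C := 1 + ∑ j, ∑ k ∈ K, ‖b.repr (ψ j) k‖
  have hC : 0 < C := by positivity
  obtain ⟨W, hW, hWK⟩ := h (ε / 3 / C) (by positivity) K
  refine ⟨W, hW, fun j => ?_⟩
  set χ := ∑ k ∈ K, b.repr (ψ j) k • b k
  have htail : ∀ X : H →L[ℂ] H, ‖X‖ ≤ 1 → ‖X (ψ j - χ)‖ < ε / 3 := fun X hX =>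
    ((X.le_opNorm _).trans (mul_le_of_le_one_left (norm_nonneg _) hX)).trans_lt (hK j)
  have hcoeff : ∑ k ∈ K, ‖b.repr (ψ j) k‖ < C := by
    have := Finset.single_le_sum (f := fun j => ∑ k ∈ K, ‖b.repr (ψ j) k‖)
      (fun _ _ => by positivity) (Finset.mem_univ j)
    simp only at this
    linarith
  have hhead : ‖W χ - T χ‖ < ε / 3 :=
    calc ‖W χ - T χ‖ = ‖∑ k ∈ K, b.repr (ψ j) k • (W (b k) - T (b k))‖ := by
          simp only [χ, map_sum, map_smul, smul_sub, Finset.sum_sub_distrib]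
      _ ≤ ∑ k ∈ K, ‖b.repr (ψ j) k‖ * (ε / 3 / C) := by
          refine norm_sum_le_of_le _ fun k hk => ?_
          rw [norm_smul]
          gcongr
          exact (hWK k hk).le
      _ < C * (ε / 3 / C) := by rw [← Finset.sum_mul]; gcongr
      _ = ε / 3 := mul_div_cancel₀ _ hC.ne'
  have hsplit : W (ψ j) - T (ψ j) = W (ψ j - χ) + (W χ - T χ) - T (ψ j - χ) := by
    simp only [map_sub]
    abel
  calc ‖W (ψ j) - T (ψ j)‖ ≤ ‖W (ψ j - χ)‖ + ‖W χ - T χ‖ + ‖T (ψ j - χ)‖ := by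
        rw [hsplit]
        exact (norm_sub_le _ _).trans (by gcongr; exact norm_add_le _ _)
    _ < ε / 3 + ε / 3 + ε / 3 := add_lt_add (add_lt_add (htail W (hS W hW)) hhead) (htail T hT)
    _ = ε := by ring

end StrongClosure

section Operators

variable {H : Type*} [NormedAddCommGroup H] [InnerProductSpace ℂ H] [CompleteSpace H]

lemma exp_I_smul_mem_unitary {B : H →L[ℂ] H} (hB : IsSelfAdjoint B) (t : ℝ) :
    exp (I • ((t : ℂ) • B)) ∈ unitary (H →L[ℂ] H) := by
  let _ : NormedAlgebra ℚ (H →L[ℂ] H) := NormedAlgebra.restrictScalars ℚ ℂ _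
  exact exp_mem_unitary_of_mem_skewAdjoint
    ((IsSelfAdjoint.smul (Complex.conj_ofReal t) hB).I_smul_mem_skewAdjoint (K := ℂ))

lemma norm_le_one_of_mem_unitary {U : H →L[ℂ] H} (hU : U ∈ unitary (H →L[ℂ] H)) : ‖U‖ ≤ 1 :=
  U.opNorm_le_bound zero_le_one fun x => by rw [U.norm_map_of_mem_unitary hU, one_mul]

theorem exp_I_smul_mem_strongClosure_of_hilbertBasis {ι : Type*} (b : HilbertBasis ι ℂ H)
    {B : H →L[ℂ] H} (hB : IsSelfAdjoint B) (μ : ι → ℝ) (hμ : ∀ k, B (b k) = (μ k : ℂ) • b k)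
    (t : ℝ) :
    exp (I • ((t : ℂ) • B)) ∈
      strongClosure {W | ∃ τ : ℝ, 0 < τ ∧ W = exp (I • ((τ : ℂ) • B))} := by
  have happly : ∀ (τ : ℝ) k,
      exp (I • ((τ : ℂ) • B)) (b k) = Complex.exp (↑(τ * μ k) * I) • b k :=
    fun τ k => exp_apply_of_apply_eq_smul <| by
      rw [smul_apply, smul_apply, hμ, smul_smul, smul_smul]
      push_cast
      ring_nf
  refine b.mem_strongClosure_of_forall_finset
    (fun W ⟨τ, _, hW⟩ => hW ▸ norm_le_one_of_mem_unitary (exp_I_smul_mem_unitary hB τ))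
    (norm_le_one_of_mem_unitary (exp_I_smul_mem_unitary hB t)) fun δ hδ K => ?_
  obtain ⟨s, hs, hsK⟩ := exists_gt_forall_norm_exp_mul_I_sub_one_lt (fun k : K => μ k) |t| hδ
  refine ⟨exp (I • (((t + s : ℝ) : ℂ) • B)), ⟨t + s, by linarith [neg_abs_le t], rfl⟩,
    fun k hk => ?_⟩
  have hphase : Complex.exp (↑((t + s) * μ k) * I) - Complex.exp (↑(t * μ k) * I)
      = Complex.exp (↑(t * μ k) * I) * (Complex.exp (↑(s * μ k) * I) - 1) := by
    rw [mul_sub, mul_one, ← Complex.exp_add]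
    push_cast
    ring_nf
  rw [happly, happly, ← sub_smul, norm_smul, b.orthonormal.1 k, mul_one, hphase, norm_mul,
    Complex.norm_exp_ofReal_mul_I, one_mul]
  exact hsK ⟨k, hk⟩

end Operators

section ControlSystem

variable {H : Type*} [NormedAddCommGroup H] [InnerProductSpace ℂ H] [CompleteSpace H]
  (H0 : H →L[ℂ] H) {N : ℕ} (Hc : Fin N → H →L[ℂ] H)

def reachableGenerators : Set (H →L[ℂ] H) :=
  {W | ∃ τ : ℝ, 0 < τ ∧ ∃ y : Fin N → ℝ,
    W = exp (I • ((τ : ℂ) • (H0 + ∑ j, (y j : ℂ) • Hc j)))}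

def dynamicalGenerators : Set (H →L[ℂ] H)ˣ :=
  {u | ∃ t : ℝ, (u : H →L[ℂ] H) = exp (I • ((t : ℂ) • H0)) ∨
    ∃ j : Fin N, (u : H →L[ℂ] H) = exp (I • ((t : ℂ) • Hc j))}

lemma setOf_list_ofFn_prod_eq_closure_reachableGenerators :
    {W : H →L[ℂ] H | ∃ (m : ℕ) (τ : Fin m → ℝ) (y : Fin m → Fin N → ℝ), (∀ i, 0 < τ i) ∧
      W = (List.ofFn fun i : Fin m => exp
        (I • ((τ i : ℂ) • (H0 + ∑ j : Fin N, (y i j : ℂ) • Hc j)))).prod} =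
      Submonoid.closure (reachableGenerators H0 Hc) := by
  ext W
  rw [SetLike.mem_coe, Submonoid.mem_closure_iff_exists_ofFn]
  constructor
  · rintro ⟨m, τ, y, hτ, rfl⟩
    exact ⟨m, _, fun i => ⟨τ i, hτ i, y i, rfl⟩, rfl⟩
  · rintro ⟨m, g, hg, rfl⟩
    choose τ hτ y hy using hg
    exact ⟨m, τ, y, hτ, congrArg _ (List.ofFn_inj.mpr (funext hy))⟩

variable {H0 Hc}

lemma inv_mem_dynamicalGenerators {u : (H →L[ℂ] H)ˣ} (hu : u ∈ dynamicalGenerators H0 Hc) :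
    u⁻¹ ∈ dynamicalGenerators H0 Hc := by
  let _ : NormedAlgebra ℚ (H →L[ℂ] H) := NormedAlgebra.restrictScalars ℚ ℂ _
  have hneg : ∀ (t : ℝ) (X : H →L[ℂ] H),
      -(I • ((t : ℂ) • X)) = I • (((-t : ℝ) : ℂ) • X) := by
    intro t X
    push_cast
    rw [neg_smul, smul_neg]
  obtain ⟨t, hu | ⟨j, hu⟩⟩ := hu
  · exact ⟨-t, Or.inl (by rw [Units.val_inv_eq_exp_neg hu, hneg])⟩
  · exact ⟨-t, Or.inr ⟨j, by rw [Units.val_inv_eq_exp_neg hu, hneg]⟩⟩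

lemma reachableGenerators_subset_unitary (hH0 : IsSelfAdjoint H0)
    (hHc : ∀ j, IsSelfAdjoint (Hc j)) : reachableGenerators H0 Hc ⊆ unitary (H →L[ℂ] H) := by
  rintro _ ⟨τ, -, y, rfl⟩
  refine exp_I_smul_mem_unitary (hH0.add (isSelfAdjoint_sum _ fun j _ => ?_)) τ
  exact IsSelfAdjoint.smul (Complex.conj_ofReal _) (hHc j)

lemma closure_reachableGenerators_subset_closure [Nontrivial H] :
    (Submonoid.closure (reachableGenerators H0 Hc) : Set (H →L[ℂ] H)) ⊆
      closure (Units.val '' (Subgroup.closure (dynamicalGenerators H0 Hc) : Set (H →L[ℂ] H)ˣ)) := by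
  let _ : NormedAlgebra ℚ (H →L[ℂ] H) := NormedAlgebra.restrictScalars ℚ ℂ _
  set G := (Subgroup.closure (dynamicalGenerators H0 Hc)).toSubmonoid.map
    (Units.coeHom (H →L[ℂ] H))
  set M := G.topologicalClosure
  have hM : IsClosed (M : Set (H →L[ℂ] H)) := Submonoid.isClosed_topologicalClosure _
  have hunit : ∀ u ∈ dynamicalGenerators H0 Hc, (u : H →L[ℂ] H) ∈ M :=
    fun u hu => G.le_topologicalClosure ⟨u, Subgroup.subset_closure hu, rfl⟩
  have hdrift (t : ℝ) : exp ((t : ℂ) • (I • H0)) ∈ M := by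
    rw [smul_comm]
    exact hunit _ ⟨t, Or.inl (isUnit_exp _).unit_spec⟩
  have hcontrol (j : Fin N) (r t : ℝ) : exp ((t : ℂ) • ((r : ℂ) • (I • Hc j))) ∈ M := by
    have hscalar : (t : ℂ) • ((r : ℂ) • (I • Hc j)) = I • (((t * r : ℝ) : ℂ) • Hc j) := by
      push_cast
      module
    rw [hscalar]
    exact hunit _ ⟨t * r, Or.inr ⟨j, (isUnit_exp _).unit_spec⟩⟩
  have hgen : reachableGenerators H0 Hc ⊆ M := by
    rintro _ ⟨τ, -, y, rfl⟩
    have hexponent : I • ((τ : ℂ) • (H0 + ∑ j, (y j : ℂ) • Hc j)) =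
        (τ : ℂ) • (I • H0 + ∑ j, (y j : ℂ) • (I • Hc j)) := by
      simp only [smul_add, Finset.smul_sum, smul_comm I]
    rw [hexponent]
    exact exp_smul_add_mem_of_isClosed hM hdrift
      (exp_smul_sum_mem_of_isClosed hM _ fun j _ => hcontrol j (y j)) τ
  exact Submonoid.closure_le.mpr hgen

lemma exp_I_smul_control_mem_closure (j : Fin N) (t : ℝ) :
    exp (I • ((t : ℂ) • Hc j)) ∈ closure (reachableGenerators H0 Hc) := by
  let _ : NormedAlgebra ℚ (H →L[ℂ] H) := NormedAlgebra.restrictScalars ℚ ℂ _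
  have hlim : Tendsto (fun τ : ℝ => exp (I • ((τ : ℂ) • H0 + (t : ℂ) • Hc j)))
      (𝓝[>] 0) (𝓝 (exp (I • ((t : ℂ) • Hc j)))) := by
    have hcont : Continuous fun τ : ℝ => exp (I • ((τ : ℂ) • H0 + (t : ℂ) • Hc j)) := by
      fun_prop
    simpa using (hcont.tendsto 0).mono_left nhdsWithin_le_nhds
  refine mem_closure_of_tendsto hlim ?_
  filter_upwards [self_mem_nhdsWithin] with τ (hτ : 0 < τ)
  refine ⟨τ, hτ, Pi.single j (t / τ), ?_⟩
  simp [Pi.single_apply, smul_add, smul_smul, mul_div_cancel₀ t hτ.ne']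

lemma exp_I_smul_drift_mem_strongClosure {ι : Type*} (b : HilbertBasis ι ℂ H)
    (hH0 : IsSelfAdjoint H0) (μ : ι → ℝ) (hμ : ∀ k, H0 (b k) = (μ k : ℂ) • b k) (t : ℝ) :
    exp (I • ((t : ℂ) • H0)) ∈ strongClosure (reachableGenerators H0 Hc) :=
  strongClosure_mono (by rintro _ ⟨τ, hτ, rfl⟩; exact ⟨τ, hτ, 0, by simp⟩)
    (exp_I_smul_mem_strongClosure_of_hilbertBasis b hH0 μ hμ t)

lemma units_val_closure_dynamicalGenerators_subset_strongClosure {ι : Type*}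
    (b : HilbertBasis ι ℂ H) (hH0 : IsSelfAdjoint H0) (μ : ι → ℝ)
    (hμ : ∀ k, H0 (b k) = (μ k : ℂ) • b k) (hHc : ∀ j, IsSelfAdjoint (Hc j)) :
    Units.val '' (Subgroup.closure (dynamicalGenerators H0 Hc) : Set (H →L[ℂ] H)ˣ) ⊆
      strongClosure (Submonoid.closure (reachableGenerators H0 Hc)) := by
  set R := Submonoid.closure (reachableGenerators H0 Hc)
  have hR : ∀ W ∈ R, ‖W‖ ≤ 1 := fun W hW => norm_le_one_of_mem_unitary <|
    Submonoid.closure_le.mpr (reachableGenerators_subset_unitary hH0 hHc) hW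
  have hgen : ∀ u ∈ dynamicalGenerators H0 Hc, (u : H →L[ℂ] H) ∈ strongClosure R := by
    rintro u ⟨t, hu | ⟨j, hu⟩⟩ <;> rw [hu] <;> refine strongClosure_mono Submonoid.subset_closure ?_
    · exact exp_I_smul_drift_mem_strongClosure b hH0 μ hμ t
    · exact closure_subset_strongClosure _ (exp_I_smul_control_mem_closure j t)
  rintro _ ⟨u, hu, rfl⟩
  induction hu using Subgroup.closure_induction'' with
  | mem u hu => exact hgen u hu
  | inv_mem u hu => exact hgen _ (inv_mem_dynamicalGenerators hu)
  | one => exact subset_strongClosure _ R.one_mem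
  | mul u v _ _ hu hv => exact mul_mem_strongClosure hR hu hv

end ControlSystem

/-- Corollary to Proposition 3 of the paper: under a pure point spectrum drift and
bounded self-adjoint controls, the strongly reachable set equals the restricted
dynamical group, i.e. the strong closure of the subgroup of invertible bounded
operators generated by the exponentials `exp (i t H_j)`, `j = 0, …, N`. -/
theorem reachable_set_eq_restricted_dynamical_group
    {H : Type*} [NormedAddCommGroup H] [InnerProductSpace ℂ H] [CompleteSpace H]
    (φ : HilbertBasis ℕ ℂ H) (H0 : H →L[ℂ] H)
    (hH0sa : ∀ ψ χ : H, ⟪H0 ψ, χ⟫_ℂ = ⟪ψ, H0 χ⟫_ℂ)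
    (μ : ℕ → ℝ) (hμ : ∀ k, H0 (φ k) = (μ k : ℂ) • φ k)
    (N : ℕ) (Hc : Fin N → (H →L[ℂ] H))
    (hHcsa : ∀ j, ∀ ψ χ : H, ⟪Hc j ψ, χ⟫_ℂ = ⟪ψ, Hc j χ⟫_ℂ) :
    strongClosure {W : H →L[ℂ] H |
        ∃ (m : ℕ) (τ : Fin m → ℝ) (y : Fin m → Fin N → ℝ),
          (∀ i, 0 < τ i) ∧
          W = (List.ofFn fun i : Fin m => NormedSpace.exp
            (Complex.I • ((τ i : ℂ) • (H0 + ∑ j : Fin N, (y i j : ℂ) • Hc j)))).prod} =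
    strongClosure
      (((↑) : (H →L[ℂ] H)ˣ → (H →L[ℂ] H)) ''
        (Subgroup.closure {u : (H →L[ℂ] H)ˣ | ∃ t : ℝ,
            (u : H →L[ℂ] H) = NormedSpace.exp (Complex.I • ((t : ℂ) • H0)) ∨
            ∃ j : Fin N,
              (u : H →L[ℂ] H) = NormedSpace.exp (Complex.I • ((t : ℂ) • Hc j))} :
          Set (H →L[ℂ] H)ˣ)) := by
  have : Nontrivial H := nontrivial_of_ne _ _ (φ.orthonormal.ne_zero 0)
  have hH0 : IsSelfAdjoint H0 := ContinuousLinearMap.isSelfAdjoint_iff_isSymmetric.mpr hH0sa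
  have hHc : ∀ j, IsSelfAdjoint (Hc j) :=
    fun j => ContinuousLinearMap.isSelfAdjoint_iff_isSymmetric.mpr (hHcsa j)
  rw [setOf_list_ofFn_prod_eq_closure_reachableGenerators]
  apply subset_antisymm
  · exact strongClosure_subset_strongClosure <|
      closure_reachableGenerators_subset_closure.trans (closure_subset_strongClosure _)
  · exact strongClosure_subset_strongClosure <|
      units_val_closure_dynamicalGenerators_subset_strongClosure φ hH0 μ hμ hHc
end

section
/- (Commutator formula) Let A and B be elements of a complex Banach algebra (for instance bounded operators on a complex Hilbert space). Then lim_{n→∞} (exp(A/n) · exp(B/n) · exp(−A/n) · exp(−B/n))^{n²} = exp(AB − BA), with convergence in the norm of the algebra. -/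
/-!
Write `g = exp a`, `h = exp b` with `a, b = O(ε)`. Since `g h g⁻¹ h⁻¹ - 1 = (g h - h g) g⁻¹ h⁻¹`
and `g h - h g = [g - 1, h - 1]` with `g - 1 = a + O(ε²)`, `h - 1 = b + O(ε²)`, the group
commutator is `1 + [a, b] + O(ε³)`, hence `exp [a, b] + O(ε³)`. For `a = A/n`, `b = B/n` this says
that the `n`-th factor is `exp ([A, B]/n²) + O(1/n³)`, and raising to the power `m = n²` multiplies
the error by at most `m · O(1)`, because `‖x^m - y^m‖ ≤ m ‖1‖² (1 + r)^m ‖x - y‖` whenever `x` and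
`y` lie within `r = O(1/m)` of `1`.
-/

open Filter Asymptotics Topology Finset NormedSpace

section PowSubPow

variable {R : Type*}

theorem pow_sub_pow_eq_sum_pow_mul_sub_mul_pow [Ring R] (x y : R) (m : ℕ) :
    x ^ m - y ^ m = ∑ i ∈ range m, x ^ i * (x - y) * y ^ (m - 1 - i) := by
  have hterm : ∀ i ∈ range m, x ^ i * (x - y) * y ^ (m - 1 - i) =
      x ^ (i + 1) * y ^ (m - (i + 1)) - x ^ i * y ^ (m - i) := by
    intro i hi
    obtain ⟨k, rfl⟩ := Nat.exists_eq_add_of_lt (mem_range.mp hi)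
    rw [show i + k + 1 - 1 - i = k by omega, show i + k + 1 - (i + 1) = k by omega,
      show i + k + 1 - i = k + 1 by omega, pow_succ, pow_succ']
    noncomm_ring
  rw [sum_congr rfl hterm, sum_range_sub (fun i => x ^ i * y ^ (m - i))]
  simp

variable [SeminormedRing R]

-- Measuring `x` by `‖x - 1‖` instead of `‖x‖` keeps the bound useful when `‖1‖ > 1`.
theorem norm_pow_le_mul_one_add_pow (x : R) (k : ℕ) :
    ‖x ^ k‖ ≤ ‖(1 : R)‖ * (1 + ‖x - 1‖) ^ k := by
  induction k with
  | zero => simp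
  | succ k ih =>
    calc ‖x ^ (k + 1)‖ = ‖x ^ k + x ^ k * (x - 1)‖ := by noncomm_ring
      _ ≤ ‖x ^ k‖ * (1 + ‖x - 1‖) := by
        rw [mul_one_add]
        exact (norm_add_le _ _).trans (add_le_add le_rfl (norm_mul_le _ _))
      _ ≤ ‖(1 : R)‖ * (1 + ‖x - 1‖) ^ (k + 1) := by
        rw [pow_succ, ← mul_assoc]
        gcongr

theorem norm_pow_sub_pow_le_s15 {x y : R} {r : ℝ} (hx : ‖x - 1‖ ≤ r) (hy : ‖y - 1‖ ≤ r) (m : ℕ) :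
    ‖x ^ m - y ^ m‖ ≤ m * (‖(1 : R)‖ ^ 2 * (1 + r) ^ m * ‖x - y‖) := by
  have hr : 1 ≤ 1 + r := by linarith [(norm_nonneg _).trans hx]
  rw [pow_sub_pow_eq_sum_pow_mul_sub_mul_pow]
  refine (norm_sum_le _ _).trans ?_
  refine (sum_le_card_nsmul (range m) _ (‖(1 : R)‖ ^ 2 * (1 + r) ^ m * ‖x - y‖)
    fun i hi => ?_).trans_eq (by rw [card_range, nsmul_eq_mul])
  calc ‖x ^ i * (x - y) * y ^ (m - 1 - i)‖
      ≤ ‖x ^ i‖ * ‖x - y‖ * ‖y ^ (m - 1 - i)‖ := norm_mul₃_le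
    _ ≤ (‖(1 : R)‖ * (1 + r) ^ i) * ‖x - y‖ * (‖(1 : R)‖ * (1 + r) ^ (m - 1 - i)) := by
      gcongr
      · exact (norm_pow_le_mul_one_add_pow x i).trans (by gcongr)
      · exact (norm_pow_le_mul_one_add_pow y _).trans (by gcongr)
    _ = ‖(1 : R)‖ ^ 2 * (1 + r) ^ (i + (m - 1 - i)) * ‖x - y‖ := by ring
    _ ≤ ‖(1 : R)‖ ^ 2 * (1 + r) ^ m * ‖x - y‖ := by
      have := mem_range.mp hi
      gcongr
      omega

theorem tendsto_pow_sub_pow_of_isBigO {ι : Type*} {l : Filter ι} {x y : ι → R} {m : ι → ℕ}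
    (hx : (fun i => x i - 1) =O[l] fun i => (m i : ℝ)⁻¹)
    (hy : (fun i => y i - 1) =O[l] fun i => (m i : ℝ)⁻¹)
    (hxy : (fun i => x i - y i) =o[l] fun i => (m i : ℝ)⁻¹) :
    Tendsto (fun i => x i ^ m i - y i ^ m i) l (𝓝 0) := by
  obtain ⟨Cx, hCx⟩ := hx.bound
  obtain ⟨Cy, hCy⟩ := hy.bound
  set C := max (max Cx Cy) 0
  have hm_mul_xy : Tendsto (fun i => (m i : ℝ) * ‖x i - y i‖) l (𝓝 0) := by
    refine (isLittleO_one_iff ℝ).mp (((isBigO_refl (fun i => (m i : ℝ)) l).mul_isLittleO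
      hxy.norm_left).trans_isBigO ((isBigO_one_iff ℝ).mpr (isBoundedUnder_of ⟨1, fun i => ?_⟩)))
    by_cases h : m i = 0 <;> simp [h]
  refine squeeze_zero_norm' ?_ (by simpa using hm_mul_xy.const_mul (‖(1 : R)‖ ^ 2 * Real.exp C))
  filter_upwards [hCx, hCy] with i hxi hyi
  have hCm : ∀ {c : ℝ}, c ≤ C → c * ‖(m i : ℝ)⁻¹‖ ≤ C / m i := fun hc => by
    rw [norm_inv, Real.norm_natCast, div_eq_mul_inv]
    gcongr
  have hexp : (1 + C / m i) ^ m i ≤ Real.exp C := by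
    have := Real.one_sub_div_pow_le_exp_neg (n := m i) (t := -C)
      (by linarith [le_max_right (max Cx Cy) 0, (m i).cast_nonneg (α := ℝ)])
    rwa [neg_div, sub_neg_eq_add, neg_neg] at this
  calc ‖x i ^ m i - y i ^ m i‖
      ≤ m i * (‖(1 : R)‖ ^ 2 * (1 + C / m i) ^ m i * ‖x i - y i‖) :=
        norm_pow_sub_pow_le_s15 (hxi.trans (hCm (le_max_of_le_left (le_max_left _ _))))
          (hyi.trans (hCm (le_max_of_le_left (le_max_right _ _)))) (m i)
    _ = ‖(1 : R)‖ ^ 2 * (1 + C / m i) ^ m i * (m i * ‖x i - y i‖) := by ring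
    _ ≤ ‖(1 : R)‖ ^ 2 * Real.exp C * (m i * ‖x i - y i‖) := by gcongr

end PowSubPow

theorem Filter.Tendsto.isLittleO_pow_succ {α : Type*} {l : Filter α} {ε : α → ℝ}
    (hε : Tendsto ε l (𝓝 0)) (k : ℕ) :
    (fun t => ε t ^ (k + 1)) =o[l] fun t => ε t ^ k :=
  (((isBigO_refl _ l).mul_isLittleO ((isLittleO_one_iff ℝ).mpr hε)).congr_left
    fun _ => (pow_succ _ _).symm).congr_right fun _ => mul_one _

theorem Asymptotics.IsBigO.commutator {α R : Type*} [SeminormedRing R] {l : Filter α}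
    {u v : α → R} {f g : α → ℝ} (hu : u =O[l] f) (hv : v =O[l] g) :
    (fun t => u t * v t - v t * u t) =O[l] fun t => f t * g t :=
  (hu.mul hv).sub ((hv.mul hu).congr_right fun _ => mul_comm _ _)

theorem mul_mul_mul_mul_sub_one {R : Type*} [Ring R] {g h g' h' : R} (hg : g * g' = 1)
    (hh : h * h' = 1) :
    g * h * g' * h' - 1 = ((g - 1) * (h - 1) - (h - 1) * (g - 1)) * (g' * h') :=
  calc g * h * g' * h' - 1 = g * h * g' * h' - h * (g * g') * h' := by rw [hg, mul_one, hh]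
    _ = ((g - 1) * (h - 1) - (h - 1) * (g - 1)) * (g' * h') := by noncomm_ring

namespace NormedSpace

variable {𝔸 : Type*} [NormedRing 𝔸] [NormedAlgebra ℚ 𝔸] [CompleteSpace 𝔸]

theorem isBigO_exp_sub_one_sub_self :
    (fun x : 𝔸 => exp x - 1 - x) =O[𝓝 0] fun x => ‖x‖ ^ 2 := by
  simpa [FormalMultilinearSeries.partialSum, sum_range_succ, expSeries_apply_eq, sub_sub] using
    (exp_hasFPowerSeriesAt_zero (𝕂 := ℚ) (𝔸 := 𝔸)).isBigO_sub_partialSum_pow 2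

theorem exp_mul_exp_neg (x : 𝔸) : exp x * exp (-x) = 1 := by
  rw [← exp_add_of_commute (Commute.refl x).neg_right, add_neg_cancel, exp_zero]

variable {α : Type*} {l : Filter α} {ε : α → ℝ} {a b : α → 𝔸}

theorem _root_.Asymptotics.IsBigO.exp_sub_one_sub_self (ha : a =O[l] ε)
    (hε : Tendsto ε l (𝓝 0)) :
    (fun t => exp (a t) - 1 - a t) =O[l] fun t => ε t ^ 2 :=
  (isBigO_exp_sub_one_sub_self.comp_tendsto (ha.trans_tendsto hε)).trans (ha.norm_left.pow 2)

theorem _root_.Asymptotics.IsBigO.exp_sub_one (ha : a =O[l] ε) (hε : Tendsto ε l (𝓝 0)) :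
    (fun t => exp (a t) - 1) =O[l] ε :=
  (((ha.exp_sub_one_sub_self hε).trans (by simpa using (hε.isLittleO_pow_succ 1).isBigO)).add
    ha).congr_left fun _ => sub_add_cancel _ _

theorem isBigO_exp_mul_exp_mul_exp_neg_mul_exp_neg_sub_exp_commutator
    (hε : Tendsto ε l (𝓝 0)) (ha : a =O[l] ε) (hb : b =O[l] ε) :
    (fun t => exp (a t) * exp (b t) * exp (-a t) * exp (-b t) - exp (a t * b t - b t * a t))
      =O[l] fun t => ε t ^ 3 := by
  set c := fun t => a t * b t - b t * a t
  set w := fun t => exp (-a t) * exp (-b t)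
  have hc : c =O[l] fun t => ε t ^ 2 := (ha.commutator hb).congr_right fun _ => (sq _).symm
  have hexp_neg_b : (fun t => exp (-b t)) =O[l] fun _ => (1 : ℝ) :=
    (hb.neg_left.trans_tendsto hε).exp.isBigO_one ℝ
  have hw : (fun t => w t - 1) =O[l] ε :=
    ((((ha.neg_left.exp_sub_one hε).mul hexp_neg_b).congr_right fun _ => mul_one _).add
      (hb.neg_left.exp_sub_one hε)).congr_left fun t => by simp only [w]; noncomm_ring
  have hw_bdd : w =O[l] fun _ => (1 : ℝ) :=
    ((hw.trans (hε.isBigO_one ℝ)).add (isBigO_const_const (1 : 𝔸) one_ne_zero l)).congr_left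
      fun _ => sub_add_cancel _ _
  have hcomm : (fun t => ((exp (a t) - 1) * (exp (b t) - 1) - (exp (b t) - 1) * (exp (a t) - 1))
      - c t) =O[l] fun t => ε t ^ 3 :=
    ((((ha.exp_sub_one_sub_self hε).commutator (hb.exp_sub_one hε)).congr_right
        fun _ => (pow_succ _ _).symm).add
      ((ha.commutator (hb.exp_sub_one_sub_self hε)).congr_right fun _ => by ring)).congr_left
      fun t => by simp only [c]; noncomm_ring
  have hmain : (fun t => exp (a t) * exp (b t) * exp (-a t) * exp (-b t) - 1 - c t)
      =O[l] fun t => ε t ^ 3 :=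
    (((hcomm.mul hw_bdd).congr_right fun _ => mul_one _).add
      ((hc.mul hw).congr_right fun _ => (pow_succ _ _).symm)).congr_left fun t => by
        rw [mul_mul_mul_mul_sub_one (exp_mul_exp_neg _) (exp_mul_exp_neg _)]
        noncomm_ring
  have hexp_c : (fun t => exp (c t) - 1 - c t) =O[l] fun t => ε t ^ 3 :=
    ((hc.exp_sub_one_sub_self (by simpa using hε.pow 2)).congr_right
      fun _ => (pow_mul _ _ _).symm).trans (hε.isLittleO_pow_succ 3).isBigO
  exact (hmain.sub hexp_c).congr_left fun t => by abel

end NormedSpace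

/-- Commutator formula in a complex Banach algebra, Eq. (6) of the paper:
`(exp(A/n) exp(B/n) exp(−A/n) exp(−B/n))^{n²} → exp([A,B])` in norm. -/
theorem commutator_formula
    {𝔸 : Type*} [NormedRing 𝔸] [NormedAlgebra ℂ 𝔸] [CompleteSpace 𝔸]
    (A B : 𝔸) :
    Tendsto (fun n : ℕ =>
        (NormedSpace.exp ((n : ℂ)⁻¹ • A) * NormedSpace.exp ((n : ℂ)⁻¹ • B) *
          NormedSpace.exp (-((n : ℂ)⁻¹ • A)) * NormedSpace.exp (-((n : ℂ)⁻¹ • B))) ^ (n ^ 2))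
      atTop (nhds (NormedSpace.exp (A * B - B * A))) := by
  -- `NormedSpace.exp` is the rational exponential series, and its API is stated for `ℚ`-algebras.
  let _ : NormedAlgebra ℚ 𝔸 := .restrictScalars ℚ ℂ 𝔸
  set ε : ℕ → ℝ := fun n => (n : ℝ)⁻¹
  have hε : Tendsto ε atTop (𝓝 0) := tendsto_inv_atTop_nhds_zero_nat
  have hscale : ∀ (k : ℕ) (C : 𝔸), (fun n : ℕ => (n : ℂ)⁻¹ ^ k • C) =O[atTop] fun n => ε n ^ k :=
    fun k C => isBigO_of_le' (c := ‖C‖) atTop fun n => by simp [ε, norm_smul, mul_comm]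
  set z : ℕ → 𝔸 := fun n => (n : ℂ)⁻¹ • A * (n : ℂ)⁻¹ • B - (n : ℂ)⁻¹ • B * (n : ℂ)⁻¹ • A
  have hz : ∀ n, z n = (n : ℂ)⁻¹ ^ 2 • (A * B - B * A) := fun n => by
    simp only [z, smul_mul_smul_comm, smul_sub, sq]
  have hxy : (fun n => _ - exp (z n)) =O[atTop] fun n => ε n ^ 3 :=
    isBigO_exp_mul_exp_mul_exp_neg_mul_exp_neg_sub_exp_commutator hε
      (by simpa using hscale 1 A) (by simpa using hscale 1 B)
  have hy : (fun n => exp (z n) - 1) =O[atTop] fun n => ε n ^ 2 :=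
    ((hscale 2 _).congr_left fun n => (hz n).symm).exp_sub_one (by simpa using hε.pow 2)
  have hx := ((hxy.trans (hε.isLittleO_pow_succ 2).isBigO).add hy).congr_left
    fun n => sub_add_sub_cancel _ _ _
  have hm : ∀ n : ℕ, ε n ^ 2 = ((n ^ 2 : ℕ) : ℝ)⁻¹ := fun n => by simp [ε]
  have hlim := tendsto_pow_sub_pow_of_isBigO (m := fun n => n ^ 2) (hx.congr_right hm)
    (hy.congr_right hm) ((hxy.trans_isLittleO (hε.isLittleO_pow_succ 2)).congr_right hm)
  refine (zero_add (exp (A * B - B * A)) ▸ hlim.add_const (exp (A * B - B * A))).congr' ?_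
  filter_upwards [eventually_ne_atTop 0] with n hn
  rw [← exp_nsmul, hz, ← Nat.cast_smul_eq_nsmul ℂ, smul_smul, Nat.cast_pow, ← mul_pow,
    mul_inv_cancel₀ (Nat.cast_ne_zero.mpr hn), one_pow, one_smul, sub_add_cancel]
end
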